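/- arXiv:2203.12786 — 3 statements merged into one kernel-verified Lean document; each statement's English description precedes it below -/
import Mathlib

section
/- Let (Z, 𝒵) be a measurable space, κ a Markov kernel from Z to Z (so κ(z) is a probability measure on Z for each z, measurably in z), r : Z → ℝ a bounded measurable function, and γ ∈ [0,1). Let Q* : Z → ℝ be a bounded measurable function satisfying the Bellman evaluation equation Q*(z) = r(z) + γ ∫ Q* dκ(z) for all z ∈ Z. Let ν be a probability measure on Z, define ν₀ = ν and ν_{h+1} = ν_h bound with κ (i.e., ν_{h+1}(A) = ∫ κ(z)(A) dν_h(z)), and define the discounted occupancy measure d_ν = (1 − γ) Σ_{h=0}^∞ γ^h ν_h. Then for every bounded measurable Q : Z → ℝ, ∫ (Q − Q*) dν = (1/(1 − γ)) ∫ [Q(z) − r(z) − γ ∫ Q dκ(z)] d d_ν(z). -/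
/-!
By the fixed-point equation, the Bellman error of `Q` is `D - γ κD` with `D = Q - Q*`.
Since `ν_{h+1} = ν_h.bind κ`, its integral against `ν_h` is `a_h - γ a_{h+1}` with
`a_h = ∫ D dν_h`, so against `d_ν` it is `(1 - γ) ∑ γ^h (a_h - γ a_{h+1})`, a telescoping series
with sum `(1 - γ) a_0` because `a` is bounded.
-/

open MeasureTheory ProbabilityTheory

section BoundedIntegrals

variable {α β : Type*} [MeasurableSpace α] [MeasurableSpace β]

lemma integrable_of_abs_le {μ : Measure α} [IsFiniteMeasure μ] {f : α → ℝ} (hf : Measurable f)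
    (hfb : ∃ C, ∀ x, |f x| ≤ C) : Integrable f μ :=
  let ⟨C, hC⟩ := hfb
  .of_bound hf.aestronglyMeasurable C (.of_forall hC)

lemma abs_integral_le_of_abs_le {μ : Measure α} [IsProbabilityMeasure μ] {f : α → ℝ} {C : ℝ}
    (hC : ∀ x, |f x| ≤ C) : |∫ x, f x ∂μ| ≤ C := by
  simpa using norm_integral_le_of_norm_le_const (μ := μ) (f := f) (.of_forall hC)

lemma bounded_sub_mul_integral_kernel (κ : Kernel α α) [IsMarkovKernel κ] (γ : ℝ) {f : α → ℝ}
    (hfb : ∃ C, ∀ x, |f x| ≤ C) : ∃ C, ∀ x, |f x - γ * ∫ y, f y ∂κ x| ≤ C := by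
  obtain ⟨C, hC⟩ := hfb
  refine ⟨C + |γ| * C, fun x => (abs_sub _ _).trans (add_le_add (hC x) ?_)⟩
  rw [abs_mul]
  exact mul_le_mul_of_nonneg_left (abs_integral_le_of_abs_le hC) (abs_nonneg γ)

lemma integral_bind_kernel (μ : Measure α) [IsFiniteMeasure μ] (κ : Kernel α β) [IsMarkovKernel κ]
    {f : β → ℝ} (hf : Measurable f) (hfb : ∃ C, ∀ y, |f y| ≤ C) :
    ∫ y, f y ∂(μ.bind κ) = ∫ x, ∫ y, f y ∂κ x ∂μ := by
  have hint : Integrable f (μ.bind κ) := integrable_of_abs_le hf hfb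
  rw [Measure.comp_eq_comp_const_apply] at hint ⊢
  rw [Kernel.integral_comp hint, Kernel.const_apply]

lemma integral_sub_mul_integral_kernel (μ : Measure α) [IsFiniteMeasure μ] (κ : Kernel α α)
    [IsMarkovKernel κ] (γ : ℝ) {f : α → ℝ} (hf : Measurable f) (hfb : ∃ C, ∀ x, |f x| ≤ C) :
    ∫ x, (f x - γ * ∫ y, f y ∂κ x) ∂μ = ∫ x, f x ∂μ - γ * ∫ x, f x ∂(μ.bind κ) := by
  obtain ⟨C, hC⟩ := hfb
  have hκf : Integrable (fun x => ∫ y, f y ∂κ x) μ :=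
    integrable_of_abs_le hf.stronglyMeasurable.integral_kernel.measurable
      ⟨C, fun _ => abs_integral_le_of_abs_le hC⟩
  rw [integral_sub (integrable_of_abs_le hf ⟨C, hC⟩) (hκf.const_mul γ), integral_const_mul,
    integral_bind_kernel μ κ hf ⟨C, hC⟩]

lemma integral_sum_ofReal_smul {μ : ℕ → Measure α} [∀ n, IsProbabilityMeasure (μ n)]
    {w : ℕ → ℝ} (hw0 : ∀ n, 0 ≤ w n) (hw : Summable w) {f : α → ℝ} (hf : Measurable f)
    (hfb : ∃ C, ∀ x, |f x| ≤ C) :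
    ∫ x, f x ∂(Measure.sum fun n => ENNReal.ofReal (w n) • μ n) = ∑' n, w n * ∫ x, f x ∂μ n := by
  have : IsFiniteMeasure (Measure.sum fun n => ENNReal.ofReal (w n) • μ n) := by
    refine ⟨?_⟩
    simp [Measure.sum_apply _ MeasurableSet.univ, ← ENNReal.ofReal_tsum_of_nonneg hw0 hw]
  rw [integral_sum_measure (integrable_of_abs_le hf hfb)]
  simp [integral_smul_measure, ENNReal.toReal_ofReal (hw0 _)]

end BoundedIntegrals

lemma tsum_pow_mul_sub_mul_succ {γ : ℝ} (hγ0 : 0 ≤ γ) (hγ1 : γ < 1) {a : ℕ → ℝ}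
    (ha : ∃ C, ∀ n, |a n| ≤ C) : ∑' n, γ ^ n * (a n - γ * a (n + 1)) = a 0 := by
  obtain ⟨C, hC⟩ := ha
  set b : ℕ → ℝ := fun n => γ ^ n * a n
  have hb : Summable b := by
    refine .of_norm_bounded ((summable_geometric_of_lt_one hγ0 hγ1).mul_left C) fun n => ?_
    rw [Real.norm_eq_abs, abs_mul, abs_of_nonneg (pow_nonneg hγ0 n), mul_comm]
    exact mul_le_mul_of_nonneg_right (hC n) (pow_nonneg hγ0 n)
  calc ∑' n, γ ^ n * (a n - γ * a (n + 1)) = ∑' n, (b n - b (n + 1)) := by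
        congr 1; ext n; simp only [b, pow_succ]; ring
    _ = b 0 := by
        rw [hb.tsum_sub ((summable_nat_add_iff 1).mpr hb), hb.tsum_eq_zero_add,
          add_sub_cancel_right]
    _ = a 0 := by simp [b]

theorem stmt_2_general {Z : Type*} [MeasurableSpace Z]
    (κ : Kernel Z Z) [IsMarkovKernel κ]
    (r : Z → ℝ)
    (γ : ℝ) (hγ0 : 0 ≤ γ) (hγ1 : γ < 1)
    (Qstar : Z → ℝ) (hQs_meas : Measurable Qstar) (hQs_bdd : ∃ C, ∀ z, |Qstar z| ≤ C)
    (hfix : ∀ z, Qstar z = r z + γ * ∫ y, Qstar y ∂(κ z))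
    (ν : Measure Z) [IsProbabilityMeasure ν]
    (seq : ℕ → Measure Z) (hseq0 : seq 0 = ν)
    (hseqS : ∀ h, seq (h + 1) = (seq h).bind (fun z => κ z))
    (dν : Measure Z)
    (hdν : dν = Measure.sum (fun h => (ENNReal.ofReal ((1 - γ) * γ ^ h)) • seq h)) :
    ∀ Q : Z → ℝ, Measurable Q → (∃ C, ∀ z, |Q z| ≤ C) →
      ∫ z, (Q z - Qstar z) ∂ν
        = (1 / (1 - γ)) * ∫ z, (Q z - r z - γ * ∫ y, Q y ∂(κ z)) ∂dν := by
  intro Q hQ hQb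
  set D : Z → ℝ := fun z => Q z - Qstar z
  have hD : Measurable D := hQ.sub hQs_meas
  obtain ⟨C, hC⟩ : ∃ C, ∀ z, |D z| ≤ C := by
    obtain ⟨C₁, h₁⟩ := hQb
    obtain ⟨C₂, h₂⟩ := hQs_bdd
    exact ⟨C₁ + C₂, fun z => (abs_sub _ _).trans (add_le_add (h₁ z) (h₂ z))⟩
  have hbellman : ∀ z, Q z - r z - γ * ∫ y, Q y ∂κ z = D z - γ * ∫ y, D y ∂κ z := fun z => by
    rw [integral_sub (integrable_of_abs_le hQ hQb) (integrable_of_abs_le hQs_meas hQs_bdd)]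
    show _ = Q z - Qstar z - _
    linear_combination hfix z
  have hprob : ∀ h, IsProbabilityMeasure (seq h) := by
    intro h
    induction h with
    | zero => rw [hseq0]; infer_instance
    | succ h _ => rw [hseqS h]; infer_instance
  have hstep : ∀ h, ∫ z, (D z - γ * ∫ y, D y ∂κ z) ∂seq h
      = ∫ z, D z ∂seq h - γ * ∫ z, D z ∂seq (h + 1) := fun h => by
    rw [hseqS h]
    exact integral_sub_mul_integral_kernel _ κ γ hD ⟨C, hC⟩
  have hw : Summable fun h : ℕ => (1 - γ) * γ ^ h :=
    (summable_geometric_of_lt_one hγ0 hγ1).mul_left _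
  have hw0 : ∀ h : ℕ, 0 ≤ (1 - γ) * γ ^ h := fun h =>
    mul_nonneg (by linarith) (pow_nonneg hγ0 h)
  have hE : Measurable fun z => D z - γ * ∫ y, D y ∂κ z :=
    hD.sub (measurable_const.mul hD.stronglyMeasurable.integral_kernel.measurable)
  calc ∫ z, D z ∂ν = (1 / (1 - γ)) * ((1 - γ) * ∫ z, D z ∂seq 0) := by
        rw [hseq0]; field_simp [show 1 - γ ≠ 0 by linarith]
    _ = (1 / (1 - γ)) * ∑' h, (1 - γ) * γ ^ h * ∫ z, (D z - γ * ∫ y, D y ∂κ z) ∂seq h := by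
        simp_rw [hstep, mul_assoc, tsum_mul_left]
        rw [tsum_pow_mul_sub_mul_succ hγ0 hγ1 ⟨C, fun h => abs_integral_le_of_abs_le hC⟩]
    _ = _ := by
        simp_rw [hbellman, hdν]
        rw [integral_sum_ofReal_smul hw0 hw hE (bounded_sub_mul_integral_kernel κ γ ⟨C, hC⟩)]

/-- Simulation lemma (Lemma 6): the prediction error of any bounded measurable
`Q` at the start distribution equals the normalized expected Bellman error under
the discounted occupancy measure. -/
theorem stmt_2 {Z : Type*} [MeasurableSpace Z]
    (κ : Kernel Z Z) [IsMarkovKernel κ]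
    (r : Z → ℝ) (hr_meas : Measurable r) (hr_bdd : ∃ C, ∀ z, |r z| ≤ C)
    (γ : ℝ) (hγ0 : 0 ≤ γ) (hγ1 : γ < 1)
    (Qstar : Z → ℝ) (hQs_meas : Measurable Qstar) (hQs_bdd : ∃ C, ∀ z, |Qstar z| ≤ C)
    (hfix : ∀ z, Qstar z = r z + γ * ∫ y, Qstar y ∂(κ z))
    (ν : Measure Z) [IsProbabilityMeasure ν]
    (seq : ℕ → Measure Z) (hseq0 : seq 0 = ν)
    (hseqS : ∀ h, seq (h + 1) = (seq h).bind (fun z => κ z))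
    (dν : Measure Z)
    (hdν : dν = Measure.sum (fun h => (ENNReal.ofReal ((1 - γ) * γ ^ h)) • seq h)) :
    ∀ Q : Z → ℝ, Measurable Q → (∃ C, ∀ z, |Q z| ≤ C) →
      ∫ z, (Q z - Qstar z) ∂ν
        = (1 / (1 - γ)) * ∫ z, (Q z - r z - γ * ∫ y, Q y ∂(κ z)) ∂dν :=
  stmt_2_general κ r γ hγ0 hγ1 Qstar hQs_meas hQs_bdd hfix ν seq hseq0 hseqS dν hdν
end

section
/- Let X be a measurable space, let K ≥ 1, let α_1, …, α_K ≥ 0 with Σ_j α_j = 1, and let ν_1, …, ν_K be probability measures on X. Let μ be the probability measure on X × {1,…,K} determined by μ(E × {j}) = α_j ν_j(E) for measurable E ⊆ X and each j. Let B : X → ℝ be a bounded measurable function, and let s, λ ≥ 0. If for each j ∈ {1,…,K} the test-function constraint |∫_{X×{j}} B(x) dμ(x,o)| ≤ s √(μ(X×{j}) + λ) holds, then Σ_{j=1}^K α_j² (∫_X B dν_j)² ≤ s² (1 + Kλ). -/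
open MeasureTheory

/-- Core of Lemma 2 (mixture policy concentrability): indicator test-function
constraints on a K-component mixture imply a bound on the weighted sum of
squared average Bellman errors. -/
theorem stmt_11 {X : Type*} [MeasurableSpace X] (K : ℕ) (hK : 1 ≤ K)
    (α : Fin K → ℝ) (hα0 : ∀ j, 0 ≤ α j) (hα1 : ∑ j, α j = 1)
    (ν : Fin K → Measure X) (hν : ∀ j, IsProbabilityMeasure (ν j))
    (μ : Measure (X × Fin K))
    (hμ : ∀ (j : Fin K) (E : Set X), MeasurableSet E →
      μ (E ×ˢ ({j} : Set (Fin K))) = ENNReal.ofReal (α j) * ν j E)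
    (B : X → ℝ) (hBmeas : Measurable B) (hBbdd : ∃ C, ∀ x, |B x| ≤ C)
    (s lam : ℝ) (hs : 0 ≤ s) (hlam : 0 ≤ lam)
    (hcon : ∀ j : Fin K,
      |∫ z in (Set.univ ×ˢ ({j} : Set (Fin K))), B z.1 ∂μ|
        ≤ s * Real.sqrt ((μ (Set.univ ×ˢ ({j} : Set (Fin K)))).toReal + lam)) :
    ∑ j, (α j) ^ 2 * (∫ x, B x ∂(ν j)) ^ 2 ≤ s ^ 2 * (1 + K * lam) := by
  -- restriction of μ to the slice is the pushforward of (α j) • ν j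
  have hrestr : ∀ j : Fin K, μ.restrict (Set.univ ×ˢ ({j} : Set (Fin K)))
      = Measure.map (fun x => (x, j)) (ENNReal.ofReal (α j) • ν j) := by
    intro j
    ext t ht
    rw [Measure.map_apply measurable_prodMk_right ht,
      Measure.restrict_apply ht]
    have hset : t ∩ Set.univ ×ˢ ({j} : Set (Fin K))
        = ((fun x => (x, j)) ⁻¹' t) ×ˢ ({j} : Set (Fin K)) := by
      ext ⟨x, o⟩
      simp only [Set.mem_inter_iff, Set.mem_prod, Set.mem_univ, Set.mem_singleton_iff,
        Set.mem_preimage, true_and]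
      constructor
      · rintro ⟨h1, h2⟩; subst h2; exact ⟨h1, rfl⟩
      · rintro ⟨h1, h2⟩; subst h2; exact ⟨h1, rfl⟩
    rw [hset, hμ j _ (ht.preimage measurable_prodMk_right),
      Measure.smul_apply, smul_eq_mul]
  have hslice : ∀ j : Fin K, (μ (Set.univ ×ˢ ({j} : Set (Fin K)))).toReal = α j := by
    intro j
    rw [hμ j Set.univ MeasurableSet.univ]
    simp [ENNReal.toReal_ofReal (hα0 j), (hν j).measure_univ]
  have hint : ∀ j : Fin K,
      ∫ z in (Set.univ ×ˢ ({j} : Set (Fin K))), B z.1 ∂μ = α j * ∫ x, B x ∂(ν j) := by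
    intro j
    have : ∫ z in (Set.univ ×ˢ ({j} : Set (Fin K))), B z.1 ∂μ
        = ∫ z, B z.1 ∂(μ.restrict (Set.univ ×ˢ ({j} : Set (Fin K)))) := rfl
    rw [this, hrestr j,
      integral_map (f := fun z : X × Fin K => B z.1) measurable_prodMk_right.aemeasurable
        (hBmeas.comp measurable_fst).aestronglyMeasurable,
      integral_smul_measure]
    simp [ENNReal.toReal_ofReal (hα0 j)]
  -- per-component bound
  have hper : ∀ j : Fin K, (α j) ^ 2 * (∫ x, B x ∂(ν j)) ^ 2 ≤ s ^ 2 * (α j + lam) := by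
    intro j
    have h := hcon j
    rw [hint j, hslice j] at h
    have h2 : |α j * ∫ x, B x ∂(ν j)| ^ 2 ≤ (s * Real.sqrt (α j + lam)) ^ 2 := by
      apply pow_le_pow_left₀ (abs_nonneg _) h
    calc (α j) ^ 2 * (∫ x, B x ∂(ν j)) ^ 2
        = |α j * ∫ x, B x ∂(ν j)| ^ 2 := by rw [sq_abs, mul_pow]
      _ ≤ (s * Real.sqrt (α j + lam)) ^ 2 := h2
      _ = s ^ 2 * (α j + lam) := by
          rw [mul_pow, Real.sq_sqrt (by linarith [hα0 j])]
  calc ∑ j, (α j) ^ 2 * (∫ x, B x ∂(ν j)) ^ 2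
      ≤ ∑ j, s ^ 2 * (α j + lam) := Finset.sum_le_sum fun j _ => hper j
    _ = s ^ 2 * (1 + K * lam) := by
        rw [← Finset.mul_sum, Finset.sum_add_distrib, hα1, Finset.sum_const,
          Finset.card_univ, Fintype.card_fin, nsmul_eq_mul]
end

section
/- Let μ and π be probability measures on a measurable space X with π absolutely continuous with respect to μ, and let w = dπ/dμ be the Radon–Nikodym derivative. Suppose w ≤ κ holds μ-almost everywhere for some constant κ ≥ 1. Let B : X → ℝ be a bounded measurable function, and let s > 0 and λ ≥ 0. If |∫ (w/κ) B dμ| ≤ s √(∫ (w/κ)² dμ + λ), then (∫ B dπ)² ≤ s² (∫ w dπ + κ² λ); consequently, (∫ B dπ)² / ((1+λ) s²) ≤ (∫ w dπ + κ² λ)/(1+λ) ≤ κ(1 + κλ)/(1+λ). -/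
open MeasureTheory

/-- Core of Proposition 3 (likelihood-ratio bounds on the off-policy cost
coefficient): the population constraint for the rescaled likelihood-ratio
test function bounds the squared average Bellman error along the target. -/
theorem stmt_12 {X : Type*} [MeasurableSpace X] (μ ρ : Measure X)
    [IsProbabilityMeasure μ] [IsProbabilityMeasure ρ]
    (hac : ρ ≪ μ)
    (w : X → ℝ) (hw : w = fun x => (ρ.rnDeriv μ x).toReal)
    (κ : ℝ) (hκ : 1 ≤ κ) (hwκ : ∀ᵐ x ∂μ, w x ≤ κ)
    (B : X → ℝ) (hB : Measurable B) (hBbdd : ∃ C, ∀ x, |B x| ≤ C)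
    (s lam : ℝ) (hs : 0 < s) (hlam : 0 ≤ lam)
    (hcon : |∫ x, (w x / κ) * B x ∂μ|
      ≤ s * Real.sqrt ((∫ x, (w x / κ) ^ 2 ∂μ) + lam)) :
    (∫ x, B x ∂ρ) ^ 2 ≤ s ^ 2 * ((∫ x, w x ∂ρ) + κ ^ 2 * lam)
    ∧ (∫ x, B x ∂ρ) ^ 2 / ((1 + lam) * s ^ 2)
        ≤ ((∫ x, w x ∂ρ) + κ ^ 2 * lam) / (1 + lam)
    ∧ ((∫ x, w x ∂ρ) + κ ^ 2 * lam) / (1 + lam)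
        ≤ κ * (1 + κ * lam) / (1 + lam) := by
  have hκ0 : (0:ℝ) < κ := lt_of_lt_of_le one_pos hκ
  have hw0 : ∀ x, 0 ≤ w x := by intro x; rw [hw]; exact ENNReal.toReal_nonneg
  -- change of variables
  have h1 : ∫ x, w x * B x ∂μ = ∫ x, B x ∂ρ := by
    rw [hw]; simpa [smul_eq_mul] using integral_rnDeriv_smul (f := B) hac
  have h2 : ∫ x, w x * w x ∂μ = ∫ x, w x ∂ρ := by
    conv_lhs => rw [show (fun x => w x * w x) = fun x => (ρ.rnDeriv μ x).toReal • w x by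
      funext x; rw [hw]; simp [smul_eq_mul]]
    exact integral_rnDeriv_smul (f := w) hac
  -- rewrite the constraint
  have hcB : ∫ x, (w x / κ) * B x ∂μ = (1/κ) * ∫ x, B x ∂ρ := by
    rw [← h1, ← integral_const_mul]; congr 1; funext x; ring
  have hcW : ∫ x, (w x / κ) ^ 2 ∂μ = (1/κ^2) * ∫ x, w x ∂ρ := by
    rw [← h2, ← integral_const_mul]; congr 1; funext x; ring
  have hρw0 : 0 ≤ ∫ x, w x ∂ρ := integral_nonneg hw0
  have hA0 : 0 ≤ (1/κ^2) * (∫ x, w x ∂ρ) + lam := by positivity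
  have key : (∫ x, B x ∂ρ) ^ 2 ≤ s ^ 2 * ((∫ x, w x ∂ρ) + κ ^ 2 * lam) := by
    have hsq : (∫ x, (w x / κ) * B x ∂μ) ^ 2
        ≤ (s * Real.sqrt ((∫ x, (w x / κ) ^ 2 ∂μ) + lam)) ^ 2 := by
      rw [← sq_abs]
      exact pow_le_pow_left₀ (abs_nonneg _) hcon 2
    rw [hcB, hcW] at hsq
    rw [show (s * Real.sqrt ((1/κ^2) * (∫ x, w x ∂ρ) + lam))^2
        = s^2 * ((1/κ^2) * (∫ x, w x ∂ρ) + lam) by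
      rw [mul_pow, Real.sq_sqrt hA0]] at hsq
    have h3 : (∫ x, B x ∂ρ) ^ 2 ≤ κ^2 * (s ^ 2 * ((1/κ^2) * (∫ x, w x ∂ρ) + lam)) := by
      have := mul_le_mul_of_nonneg_left hsq (le_of_lt (by positivity : (0:ℝ) < κ^2))
      calc (∫ x, B x ∂ρ) ^ 2 = κ^2 * ((1/κ) * ∫ x, B x ∂ρ)^2 := by
            field_simp
        _ ≤ _ := this
    calc (∫ x, B x ∂ρ) ^ 2 ≤ κ^2 * (s ^ 2 * ((1/κ^2) * (∫ x, w x ∂ρ) + lam)) := h3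
      _ = s ^ 2 * ((∫ x, w x ∂ρ) + κ ^ 2 * lam) := by field_simp
  refine ⟨key, ?_, ?_⟩
  · rw [div_le_div_iff₀ (by positivity) (by positivity)]
    calc (∫ x, B x ∂ρ) ^ 2 * (1 + lam)
        ≤ s ^ 2 * ((∫ x, w x ∂ρ) + κ ^ 2 * lam) * (1 + lam) :=
          mul_le_mul_of_nonneg_right key (by positivity)
      _ = ((∫ x, w x ∂ρ) + κ ^ 2 * lam) * ((1 + lam) * s ^ 2) := by ring
  · -- ∫ w dρ = ∫ w² dμ ≤ κ ∫ w dμ = κ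
    have hwint : Integrable w μ := by
      rw [hw]; exact Measure.integrable_toReal_rnDeriv
    have hwmeas : AEMeasurable w μ := hwint.aemeasurable
    have hsq_int : Integrable (fun x => w x * w x) μ := by
      refine Integrable.mono' (hwint.const_mul κ) (hwmeas.mul hwmeas).aestronglyMeasurable ?_
      filter_upwards [hwκ] with x hx
      rw [Real.norm_eq_abs, abs_of_nonneg (mul_nonneg (hw0 x) (hw0 x))]
      exact mul_le_mul_of_nonneg_right hx (hw0 x)
    have hle : ∫ x, w x * w x ∂μ ≤ ∫ x, κ * w x ∂μ := by
      refine integral_mono_ae hsq_int (hwint.const_mul κ) ?_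
      filter_upwards [hwκ] with x hx
      exact mul_le_mul_of_nonneg_right hx (hw0 x)
    have hμw : ∫ x, w x ∂μ = 1 := by
      rw [hw, Measure.integral_toReal_rnDeriv hac]; simp
    have hwρκ : ∫ x, w x ∂ρ ≤ κ := by
      rw [← h2]; simpa [integral_const_mul, hμw] using hle
    apply div_le_div_of_nonneg_right ?_ (by positivity)
    · nlinarith [hwρκ]
end
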